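/- For a, b ∈ ℝ and τ in the upper half-plane, g_{a,b}(-1/τ) = i e^{2πiab} (-iτ)^{3/2} g_{b,-a}(τ), where (-iτ)^{3/2} is taken with the principal branch. -/

import Mathlib

open Complex

/-!
Write `g_{a,b}(τ) = e^{πia²τ + 2πiab} (a θ(z, τ) + θ'(z, τ) / 2πi)` with `z = aτ + b`, where `θ` is
Jacobi's two-variable theta function and `θ'` its `z`-derivative. The functional equations of
`θ` and `θ'` under `τ ↦ -1/τ` show that the combination `c θ(z, τ) + θ'(z, τ) / 2πi` is again
of this shape at `(z/τ, -1/τ)`, with `c` replaced by `cτ - z`; for `c = b`, `z = bτ - a` the new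
coefficient is `a`, and comparing the exponential prefactors gives the theorem.
-/

/-- The weight 3/2 theta function `g_{a,b}(τ) = ∑_{ν ∈ a + ℤ} ν e^{πiν²τ + 2πiνb}`. -/
noncomputable def thetaG (a b : ℝ) (τ : ℂ) : ℂ :=
  ∑' n : ℤ, ((a : ℂ) + (n : ℂ))
    * Complex.exp ((Real.pi : ℂ) * I * ((a : ℂ) + (n : ℂ)) ^ 2 * τ
      + 2 * (Real.pi : ℂ) * I * ((a : ℂ) + (n : ℂ)) * (b : ℂ))

open Real

lemma thetaG_eq_jacobiTheta₂ (a b : ℝ) {τ : ℂ} (hτ : 0 < τ.im) :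
    thetaG a b τ = cexp (π * I * a ^ 2 * τ + 2 * π * I * a * b) *
      (a * jacobiTheta₂ (a * τ + b) τ + jacobiTheta₂' (a * τ + b) τ / (2 * π * I)) := by
  have hsum := (((hasSum_jacobiTheta₂_term (a * τ + b) hτ).mul_left (a : ℂ)).add
    ((hasSum_jacobiTheta₂'_term (a * τ + b) hτ).div_const (2 * π * I))).mul_left
      (cexp (π * I * a ^ 2 * τ + 2 * π * I * a * b))
  rw [thetaG, ← hsum.tsum_eq]
  congr 1
  ext n
  rw [jacobiTheta₂'_term, jacobiTheta₂_term, show π * I * (a + n) ^ 2 * τ + 2 * π * I * (a + n) * b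
    = (π * I * a ^ 2 * τ + 2 * π * I * a * b) + (2 * π * I * n * (a * τ + b) + π * I * n ^ 2 * τ)
    by ring, Complex.exp_add]
  field_simp [two_pi_I_ne_zero]

lemma jacobiTheta₂_add_jacobiTheta₂'_functional_equation (c z τ : ℂ) :
    c * jacobiTheta₂ z τ + jacobiTheta₂' z τ / (2 * π * I) =
      1 / (-I * τ) ^ (1 / 2 : ℂ) * cexp (-π * I * z ^ 2 / τ) / τ *
        ((c * τ - z) * jacobiTheta₂ (z / τ) (-1 / τ)
          + jacobiTheta₂' (z / τ) (-1 / τ) / (2 * π * I)) := by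
  rcases eq_or_ne τ 0 with rfl | hτ
  · simp [jacobiTheta₂_undef, jacobiTheta₂'_undef]
  rw [jacobiTheta₂_functional_equation z τ, jacobiTheta₂'_functional_equation z τ]
  field_simp [two_pi_I_ne_zero]
  ring

lemma cpow_three_halves_eq_mul_cpow_half {w : ℂ} (hw : w ≠ 0) :
    w ^ (3 / 2 : ℂ) = w * w ^ (1 / 2 : ℂ) := by
  rw [show (3 / 2 : ℂ) = 1 + 1 / 2 by norm_num, cpow_add _ _ hw, cpow_one]

/-- `g_{a,b}(-1/τ) = i e^{2πiab} (-iτ)^{3/2} g_{b,-a}(τ)` (principal branch). -/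
theorem thetaG_S_transform (a b : ℝ) (τ : ℂ) (hτ : 0 < τ.im) :
    thetaG a b (-1 / τ)
      = I * Complex.exp (2 * (Real.pi : ℂ) * I * (a : ℂ) * (b : ℂ))
        * (-I * τ) ^ (3 / 2 : ℂ) * thetaG b (-a) τ := by
  have hτ0 : τ ≠ 0 := by rintro rfl; simp at hτ
  have hS : 0 < (-1 / τ).im := by
    simpa [neg_div, ← inv_neg] using UpperHalfPlane.im_inv_neg_coe_pos ⟨τ, hτ⟩
  have hw : -I * τ ≠ 0 := mul_ne_zero (neg_ne_zero.mpr I_ne_zero) hτ0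
  have hz : (b : ℂ) * τ + ((-a : ℝ) : ℂ) = b * τ - a := by push_cast; ring
  have hzτ : ((b : ℂ) * τ - a) / τ = a * (-1 / τ) + b := by field_simp; ring
  have hexp : cexp (2 * π * I * a * b) * cexp (π * I * b ^ 2 * τ + 2 * π * I * b * (-a : ℝ))
      * cexp (-π * I * (b * τ - a) ^ 2 / τ) = cexp (π * I * a ^ 2 * (-1 / τ) + 2 * π * I * a * b) := by
    rw [← Complex.exp_add, ← Complex.exp_add]
    congr 1
    push_cast
    field_simp
    ring
  rw [thetaG_eq_jacobiTheta₂ a b hS, thetaG_eq_jacobiTheta₂ b (-a) hτ, hz,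
    jacobiTheta₂_add_jacobiTheta₂'_functional_equation (b : ℂ), hzτ, sub_sub_cancel, ← hexp,
    cpow_three_halves_eq_mul_cpow_half hw]
  have hr : (-I * τ) ^ (1 / 2 : ℂ) ≠ 0 := (cpow_ne_zero_iff_of_exponent_ne_zero (by norm_num)).2 hw
  field_simp
  rw [I_sq]
  ring
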